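/- arXiv:2002.03052 — 2 statements merged into one kernel-verified Lean document; each statement's English description precedes it below -/
import Mathlib

section
/- Let A and B be positive definite d×d complex matrices. Then the product BA has positive real eigenvalues (it is similar to the positive definite matrix B^{1/2}AB^{1/2}), and the vector log λ↓(B) + log λ↑(A) is majorized by log λ(BA), which in turn is majorized by log λ↓(B) + log λ↓(A). Here log is applied entrywise. -/
open Matrix Polynomial
open scoped ComplexOrder

/-- The vector `x` rearranged in non-increasing order. -/
noncomputable def sortDesc {d : ℕ} (x : Fin d → ℝ) : Fin d → ℝ :=
  fun i => x (Tuple.sort x i.rev)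

/-- The vector `x` rearranged in non-decreasing order. -/
noncomputable def sortAsc {d : ℕ} (x : Fin d → ℝ) : Fin d → ℝ :=
  fun i => x (Tuple.sort x i)

/-- `x` is submajorized by `y`. -/
noncomputable def Submajorizes {d : ℕ} (x y : Fin d → ℝ) : Prop :=
  ∀ k : Fin d, ∑ i ∈ Finset.Iic k, sortDesc x i ≤ ∑ i ∈ Finset.Iic k, sortDesc y i

/-- `x` is majorized by `y`. -/
noncomputable def Majorizes {d : ℕ} (x y : Fin d → ℝ) : Prop :=
  Submajorizes x y ∧ ∑ i, x i = ∑ i, y i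

/-- The positive semidefinite square root of a positive semidefinite matrix
(the definition of `Matrix.PosSemidef.sqrt` in the older Mathlib, since removed). -/
noncomputable def Matrix.PosSemidef.sqrt {n : Type*} {𝕜 : Type*} [Fintype n] [RCLike 𝕜]
    [DecidableEq n] {A : Matrix n n 𝕜} (hA : A.PosSemidef) : Matrix n n 𝕜 :=
  hA.1.eigenvectorUnitary.1 * diagonal ((↑) ∘ (√·) ∘ hA.1.eigenvalues) *
  (star hA.1.eigenvectorUnitary : Matrix n n 𝕜)

/-!
Gelfand–Naimark inequality: if `P = Tᴴ T` and `M = Tᴴ Q T` with `P, Q` positive definite, then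
for every set `s` of `k + 1` indices, `∏_{i ∈ s} λ↓ᵢ(M) ≤ ∏_{i ∈ s} λ↓ᵢ(P) · ∏_{i ≤ k} λ↓ᵢ(Q)`.
Raise the eigenvalues of `Q` below `c = λ↓ₖ(Q)` to `c`; the resulting `Q'` dominates `Q` and `c`,
so `M' = Tᴴ Q' T` dominates `M` and `c P` in the Loewner order. By Weyl's monotonicity
`λ↓(M) ≤ λ↓(M')` and `c λ↓(P) ≤ λ↓(M')`, and `det M' = det P · det Q'` then gives the bound.

Taking `T = B^{1/2}`, `Q = A` (so `M` is similar to `BA`) gives the upper log-majorization; taking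
`T = A^{-1/2}`, `Q = A^{1/2} B A^{1/2}` (so `M = B`, `P = A⁻¹` and `λ↓(A⁻¹) = 1 / λ↑(A)`) gives the
lower one. The total sums agree because `det (BA) = det B · det A`.
-/

open Finset
open scoped MatrixOrder

lemma prod_mul_prod_compl_le_prod {ι : Type*} [Fintype ι] [DecidableEq ι] {a b m : ι → ℝ}
    (ha : 0 ≤ a) (hb : 0 ≤ b) (ham : a ≤ m) (hbm : b ≤ m) (s : Finset ι) :
    (∏ i ∈ s, a i) * ∏ i ∈ sᶜ, b i ≤ ∏ i, m i := by
  rw [← prod_mul_prod_compl s m]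
  exact mul_le_mul (prod_le_prod (fun i _ => ha i) fun i _ => ham i)
    (prod_le_prod (fun i _ => hb i) fun i _ => hbm i) (prod_nonneg fun i _ => hb i)
    (prod_nonneg fun i _ => (ha i).trans (ham i))

section Rearrangement

variable {d : ℕ}

lemma antitone_sortDesc (x : Fin d → ℝ) : Antitone (sortDesc x) :=
  fun _ _ hij => Tuple.monotone_sort x (Fin.rev_le_rev.mpr hij)

lemma sortDesc_eq_comp_perm (x : Fin d → ℝ) :
    sortDesc x = x ∘ Fin.revPerm.trans (Tuple.sort x) :=
  rfl

lemma sortDesc_eq_of_antitone_comp {x : Fin d → ℝ} {σ : Equiv.Perm (Fin d)}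
    (h : Antitone (x ∘ σ)) : sortDesc x = x ∘ σ :=
  Tuple.unique_antitone (σ := Fin.revPerm.trans (Tuple.sort x)) (antitone_sortDesc x) h

lemma sortDesc_eq_self_of_antitone {x : Fin d → ℝ} (hx : Antitone x) : sortDesc x = x :=
  sortDesc_eq_of_antitone_comp (σ := Equiv.refl _) hx

lemma sortDesc_comp_of_monotoneOn {f : ℝ → ℝ} {x : Fin d → ℝ}
    (hf : MonotoneOn f (Set.range x)) : sortDesc (f ∘ x) = f ∘ sortDesc x :=
  sortDesc_eq_of_antitone_comp (σ := Fin.revPerm.trans (Tuple.sort x))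
    fun _ _ hij => hf (Set.mem_range_self _) (Set.mem_range_self _) (antitone_sortDesc x hij)

lemma sortDesc_comp_of_antitoneOn {f : ℝ → ℝ} {x : Fin d → ℝ}
    (hf : AntitoneOn f (Set.range x)) : sortDesc (f ∘ x) = f ∘ sortAsc x :=
  sortDesc_eq_of_antitone_comp (σ := Tuple.sort x)
    fun _ _ hij => hf (Set.mem_range_self _) (Set.mem_range_self _) (Tuple.monotone_sort x hij)

lemma sortDesc_eq_of_map_eq {x y : Fin d → ℝ} (h : univ.val.map x = univ.val.map y) :
    sortDesc x = sortDesc y := by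
  rw [Fin.univ_val_map, Fin.univ_val_map, Multiset.coe_eq_coe] at h
  refine List.ofFn_injective <| List.Perm.eq_of_pairwise'
    (antitone_sortDesc x).sortedGE_ofFn.pairwise (antitone_sortDesc y).sortedGE_ofFn.pairwise ?_
  rw [sortDesc_eq_comp_perm, sortDesc_eq_comp_perm]
  exact ((Equiv.Perm.ofFn_comp_perm _ x).trans h).trans (Equiv.Perm.ofFn_comp_perm _ y).symm

lemma card_lt_sortDesc (x : Fin d → ℝ) (t : ℝ) : #{j | t < sortDesc x j} = #{j | t < x j} :=
  card_equiv (Fin.revPerm.trans (Tuple.sort x)) (by simp [sortDesc_eq_comp_perm])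

lemma sortDesc_le_of_card_lt_le {x y : Fin d → ℝ}
    (h : ∀ t, #{j | t < x j} ≤ #{j | t < y j}) : sortDesc x ≤ sortDesc y := by
  intro i
  by_contra! hlt
  have hx := (Tuple.lt_card_gt_iff_apply_gt_of_antitone (antitone_sortDesc x) (j := i)).mpr hlt
  have hy := (Tuple.lt_card_gt_iff_apply_gt_of_antitone (antitone_sortDesc y) (j := i)
    (a := sortDesc y i)).not.mpr (lt_irrefl _)
  rw [card_lt_sortDesc] at hx hy
  exact hy (hx.trans_le (h _))

lemma prod_comp_sortDesc {M : Type*} [CommMonoid M] (f : ℝ → M) (x : Fin d → ℝ) :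
    ∏ i, f (sortDesc x i) = ∏ i, f (x i) :=
  Equiv.prod_comp (Fin.revPerm.trans (Tuple.sort x)) (f ∘ x)

lemma prod_comp_sortAsc {M : Type*} [CommMonoid M] (f : ℝ → M) (x : Fin d → ℝ) :
    ∏ i, f (sortAsc x i) = ∏ i, f (x i) :=
  Equiv.prod_comp (Tuple.sort x) (f ∘ x)

lemma prod_sortDesc (x : Fin d → ℝ) : ∏ i, sortDesc x i = ∏ i, x i :=
  prod_comp_sortDesc id x

lemma prod_sortAsc (x : Fin d → ℝ) : ∏ i, sortAsc x i = ∏ i, x i :=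
  prod_comp_sortAsc id x

lemma exists_prod_Iic_sortDesc_eq (x : Fin d → ℝ) (k : Fin d) :
    ∃ s : Finset (Fin d), #s = k + 1 ∧ ∏ i ∈ Iic k, sortDesc x i = ∏ i ∈ s, x i := by
  refine ⟨(Iic k).map (Fin.revPerm.trans (Tuple.sort x)).toEmbedding, by simp, ?_⟩
  rw [prod_map]
  rfl

lemma prod_max_apply_of_antitone {y : Fin d → ℝ} (hy : Antitone y) (k : Fin d) :
    ∏ i, max (y i) (y k) = (∏ i ∈ Iic k, y i) * y k ^ #(Iic k)ᶜ := by
  rw [← prod_mul_prod_compl (Iic k), ← prod_const]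
  congr 1
  · exact prod_congr rfl fun i hi => max_eq_left (hy (mem_Iic.mp hi))
  · exact prod_congr rfl fun i hi => max_eq_right (hy (not_le.mp (by simpa using hi)).le)

lemma log_add_log_eq_log_mul {ι : Type*} {a b : ι → ℝ} (ha : ∀ i, 0 < a i) (hb : ∀ i, 0 < b i) :
    (fun i => Real.log (a i) + Real.log (b i)) = fun i => Real.log (a i * b i) :=
  funext fun i => (Real.log_mul (ha i).ne' (hb i).ne').symm

lemma majorizes_log_of_prod_Iic_le {x y : Fin d → ℝ} (hx : ∀ i, 0 < x i) (hy : ∀ i, 0 < y i)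
    (hy_anti : Antitone y) (hle : ∀ k, ∏ i ∈ Iic k, sortDesc x i ≤ ∏ i ∈ Iic k, y i)
    (hprod : ∏ i, x i = ∏ i, y i) :
    Majorizes (fun i => Real.log (x i)) (fun i => Real.log (y i)) := by
  refine ⟨fun k => ?_, ?_⟩
  · have hlog_x : MonotoneOn Real.log (Set.range x) :=
      Real.strictMonoOn_log.monotoneOn.mono (Set.range_subset_iff.mpr hx)
    have hlog_y : Antitone (Real.log ∘ y) := fun i j hij =>
      Real.log_le_log (hy j) (hy_anti hij)
    change ∑ i ∈ Iic k, sortDesc (Real.log ∘ x) i ≤ ∑ i ∈ Iic k, sortDesc (Real.log ∘ y) i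
    rw [sortDesc_comp_of_monotoneOn hlog_x, sortDesc_eq_self_of_antitone hlog_y]
    simp only [Function.comp_apply]
    rw [← Real.log_prod (f := sortDesc x) fun i _ => (hx _).ne',
      ← Real.log_prod fun i _ => (hy i).ne']
    exact Real.log_le_log (prod_pos fun i _ => hx _) (hle k)
  · rw [← Real.log_prod fun i _ => (hx i).ne', ← Real.log_prod fun i _ => (hy i).ne', hprod]

end Rearrangement

section HermitianMatrix

variable {n : Type*} [Fintype n] [DecidableEq n]

lemma re_dotProduct_conj_diagonal_mulVec (U : Matrix n n ℂ) (w : n → ℝ) (x : n → ℂ) :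
    (star x ⬝ᵥ ((U * diagonal (fun j => (w j : ℂ)) * star U) *ᵥ x)).re =
      ∑ j, w j * Complex.normSq ((star U *ᵥ x) j) := by
  have hx : star x ᵥ* U = star (star U *ᵥ x) := by
    rw [star_mulVec, star_eq_conjTranspose, conjTranspose_conjTranspose]
  rw [← mulVec_mulVec, ← mulVec_mulVec, dotProduct_mulVec, hx, dotProduct, Complex.re_sum]
  refine sum_congr rfl fun j _ => ?_
  rw [mulVec_diagonal, Pi.star_apply, mul_left_comm, Complex.star_def,
    ← Complex.normSq_eq_conj_mul_self]
  norm_cast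

lemma Matrix.IsHermitian.re_dotProduct_mulVec_sub {M : Matrix n n ℂ} (hM : M.IsHermitian)
    (x : n → ℂ) (t : ℝ) :
    (star x ⬝ᵥ (M *ᵥ x)).re - t * (star x ⬝ᵥ x).re =
      ∑ j, (hM.eigenvalues j - t) *
        Complex.normSq ((star (hM.eigenvectorUnitary : Matrix n n ℂ) *ᵥ x) j) := by
  set U : Matrix n n ℂ := (hM.eigenvectorUnitary : Matrix n n ℂ)
  have hM' : M = U * diagonal (fun j => (hM.eigenvalues j : ℂ)) * star U := by
    conv_lhs => rw [hM.spectral_theorem, Unitary.conjStarAlgAut_apply]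
    rfl
  have h1 : star x ⬝ᵥ x = star x ⬝ᵥ ((U * diagonal (fun _ => ((1 : ℝ) : ℂ)) * star U) *ᵥ x) := by
    simp [U]
  rw [h1, congrArg (star x ⬝ᵥ · *ᵥ x) hM', re_dotProduct_conj_diagonal_mulVec,
    re_dotProduct_conj_diagonal_mulVec, mul_sum, ← sum_sub_distrib]
  simp only [sub_mul, one_mul]

lemma eq_zero_of_le_of_eigenvalues {H K : Matrix n n ℂ} (hH : H.IsHermitian)
    (hK : K.IsHermitian) (hHK : H ≤ K) {t : ℝ} {x : n → ℂ}
    (hHx : ∀ j, (star (hH.eigenvectorUnitary : Matrix n n ℂ) *ᵥ x) j = 0 ∨ t < hH.eigenvalues j)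
    (hKx : ∀ j, t < hK.eigenvalues j → (star (hK.eigenvectorUnitary : Matrix n n ℂ) *ᵥ x) j = 0) :
    x = 0 := by
  set z := star (hH.eigenvectorUnitary : Matrix n n ℂ) *ᵥ x
  -- `t‖x‖² ≤ x⋆Hx ≤ x⋆Kx ≤ t‖x‖²`, with equality on the left only if `x = 0`.
  have hH_nonneg : ∀ j, 0 ≤ (hH.eigenvalues j - t) * Complex.normSq (z j) := fun j => by
    rcases hHx j with hj | hj
    · simp [hj]
    · exact mul_nonneg (sub_nonneg.mpr hj.le) (Complex.normSq_nonneg _)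
  have hK_nonpos : ∀ j, (hK.eigenvalues j - t) *
      Complex.normSq ((star (hK.eigenvectorUnitary : Matrix n n ℂ) *ᵥ x) j) ≤ 0 := fun j => by
    by_cases hj : t < hK.eigenvalues j
    · simp [hKx j hj]
    · exact mul_nonpos_of_nonpos_of_nonneg (by linarith) (Complex.normSq_nonneg _)
  have hHK_x : (star x ⬝ᵥ (H *ᵥ x)).re ≤ (star x ⬝ᵥ (K *ᵥ x)).re := by
    have := hHK.re_dotProduct_nonneg x
    rwa [sub_mulVec, dotProduct_sub, map_sub, sub_nonneg] at this
  have hsum : ∑ j, (hH.eigenvalues j - t) * Complex.normSq (z j) = 0 := by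
    refine le_antisymm ?_ (sum_nonneg fun j _ => hH_nonneg j)
    rw [← hH.re_dotProduct_mulVec_sub]
    refine (sub_le_sub_right hHK_x _).trans ?_
    rw [hK.re_dotProduct_mulVec_sub]
    exact sum_nonpos fun j _ => hK_nonpos j
  have hz : z = 0 := funext fun j => by
    rcases hHx j with hj | hj
    · exact hj
    · have := (sum_eq_zero_iff_of_nonneg fun j _ => hH_nonneg j).mp hsum j (mem_univ _)
      exact Complex.normSq_eq_zero.mp ((mul_eq_zero.mp this).resolve_left (sub_ne_zero.mpr hj.ne'))
  rw [← one_mulVec x, ← Unitary.coe_mul_star_self hH.eigenvectorUnitary, ← mulVec_mulVec]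
  change _ *ᵥ z = 0
  rw [hz, mulVec_zero]

lemma card_lt_eigenvalues_le_of_le {H K : Matrix n n ℂ} (hH : H.IsHermitian)
    (hK : K.IsHermitian) (hHK : H ≤ K) (t : ℝ) :
    #{j | t < hH.eigenvalues j} ≤ #{j | t < hK.eigenvalues j} := by
  set S : Finset n := {j | t < hH.eigenvalues j}
  set S' : Finset n := {j | t < hK.eigenvalues j}
  set UH : Matrix n n ℂ := (hH.eigenvectorUnitary : Matrix n n ℂ)
  let f : (S → ℂ) →ₗ[ℂ] (S' → ℂ) := LinearMap.funLeft ℂ ℂ Subtype.val ∘ₗ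
    (star (hK.eigenvectorUnitary : Matrix n n ℂ)).mulVecLin ∘ₗ UH.mulVecLin ∘ₗ
      Function.ExtendByZero.linearMap ℂ Subtype.val
  suffices Function.Injective f by
    simpa using LinearMap.finrank_le_finrank_of_injective this
  rw [← LinearMap.ker_eq_bot, LinearMap.ker_eq_bot']
  intro a ha
  set z : n → ℂ := Function.extend Subtype.val a 0
  have hUHz : star UH *ᵥ (UH *ᵥ z) = z := by
    rw [mulVec_mulVec, Unitary.coe_star_mul_self, one_mulVec]
  have hx : UH *ᵥ z = 0 := by
    refine eq_zero_of_le_of_eigenvalues hH hK hHK (t := t) (fun j => ?_)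
      fun j hj => congrFun ha ⟨j, mem_filter.mpr ⟨mem_univ _, hj⟩⟩
    rw [hUHz]
    by_cases hj : t < hH.eigenvalues j
    · exact .inr hj
    · exact .inl (Function.extend_apply' _ _ _ fun ⟨i, hi⟩ => hj (hi ▸ (mem_filter.mp i.2).2))
  funext j
  simpa [z, hx, Subtype.val_injective.extend_apply] using (congrFun hUHz j).symm

lemma prod_eigenvalues_eq_of_charpoly_eq_mul
    {A B C : Matrix n n ℂ} (hA : A.IsHermitian) (hB : B.IsHermitian) (hC : C.IsHermitian)
    (h : C.charpoly = (B * A).charpoly) :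
    ∏ i, hC.eigenvalues i = (∏ i, hB.eigenvalues i) * ∏ i, hA.eigenvalues i := by
  have := congrArg (fun p : ℂ[X] => (-1) ^ Fintype.card n * p.coeff 0) h
  simp only [← det_eq_sign_charpoly_coeff, det_mul, hA.det_eq_prod_eigenvalues,
    hB.det_eq_prod_eigenvalues, hC.det_eq_prod_eigenvalues] at this
  exact_mod_cast this

lemma le_cfc_max {Q : Matrix n n ℂ} (hQ : Q.IsHermitian) (c : ℝ) :
    Q ≤ cfc (fun x => max x c) Q := by
  conv_lhs => rw [← cfc_id' ℝ Q hQ.isSelfAdjoint]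
  exact cfc_mono fun x _ => le_max_left x c

lemma smul_one_le_cfc_max {Q : Matrix n n ℂ} (hQ : Q.IsHermitian) (c : ℝ) :
    c • 1 ≤ cfc (fun x => max x c) Q := by
  rw [← Algebra.algebraMap_eq_smul_one, ← cfc_const c Q hQ.isSelfAdjoint]
  exact cfc_mono fun x _ => le_max_right x c

lemma Matrix.PosSemidef.sqrt_eq_cfcSqrt
    {A : Matrix n n ℂ} (hA : A.PosSemidef) : hA.sqrt = CFC.sqrt A := by
  rw [CFC.sqrt_eq_real_sqrt A hA.nonneg, cfcₙ_eq_cfc, hA.1.cfc_eq, IsHermitian.cfc,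
    Unitary.conjStarAlgAut_apply]
  rfl

end HermitianMatrix

section SortedSpectrum

variable {d : ℕ}

lemma sortDesc_eigenvalues_le_of_le {H K : Matrix (Fin d) (Fin d) ℂ} (hH : H.IsHermitian)
    (hK : K.IsHermitian) (hHK : H ≤ K) : sortDesc hH.eigenvalues ≤ sortDesc hK.eigenvalues :=
  sortDesc_le_of_card_lt_le (card_lt_eigenvalues_le_of_le hH hK hHK)

lemma sortDesc_eigenvalues_eq_of_charpoly_eq {M : Matrix (Fin d) (Fin d) ℂ}
    (hM : M.IsHermitian) {w : Fin d → ℝ} (h : M.charpoly = ∏ i, (X - C (w i : ℂ))) :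
    sortDesc hM.eigenvalues = sortDesc w := by
  refine sortDesc_eq_of_map_eq (Multiset.map_injective Complex.ofReal_injective ?_)
  have hroots : (∏ i, (X - C (w i : ℂ))).roots = univ.val.map fun i => (w i : ℂ) := by
    rw [roots_prod _ _ (by simp [prod_ne_zero_iff, X_sub_C_ne_zero])]
    simp
  simpa [Multiset.map_map, Function.comp_def, h, hroots] using
    hM.roots_charpoly_eq_eigenvalues.symm

lemma sortDesc_eigenvalues_eq_of_eq_cfc {A M : Matrix (Fin d) (Fin d) ℂ} (hA : A.IsHermitian)
    (hM : M.IsHermitian) {f : ℝ → ℝ} (h : M = cfc f A) :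
    sortDesc hM.eigenvalues = sortDesc (f ∘ hA.eigenvalues) :=
  sortDesc_eigenvalues_eq_of_charpoly_eq hM (h ▸ hA.charpoly_cfc_eq f)

lemma sortDesc_eigenvalues_inv {A : Matrix (Fin d) (Fin d) ℂ} (hA : A.PosDef)
    (hA' : A⁻¹.IsHermitian) :
    sortDesc hA'.eigenvalues = fun i => (sortAsc hA.1.eigenvalues i)⁻¹ := by
  have hinv : A⁻¹ = cfc (·⁻¹ : ℝ → ℝ) A := by
    rw [nonsing_inv_eq_ringInverse, cfc_ringInverse_id A hA.isUnit hA.1.isSelfAdjoint]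
  rw [sortDesc_eigenvalues_eq_of_eq_cfc hA.1 hA' hinv, sortDesc_comp_of_antitoneOn]
  · rfl
  · rintro _ ⟨i, rfl⟩ _ ⟨j, rfl⟩ hij
    exact inv_anti₀ (hA.eigenvalues_pos i) hij

lemma det_eq_prod_sortDesc_eigenvalues {M : Matrix (Fin d) (Fin d) ℂ} (hM : M.IsHermitian) :
    M.det = ∏ i, (sortDesc hM.eigenvalues i : ℂ) := by
  rw [hM.det_eq_prod_eigenvalues, prod_comp_sortDesc (fun a : ℝ => (a : ℂ))]
  rfl

end SortedSpectrum

section GelfandNaimark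

variable {d : ℕ}

lemma det_cfc_max_sortDesc_eigenvalues {Q : Matrix (Fin d) (Fin d) ℂ} (hQ : Q.IsHermitian)
    (k : Fin d) :
    (cfc (fun x => max x (sortDesc hQ.eigenvalues k)) Q).det =
      (((∏ i ∈ Iic k, sortDesc hQ.eigenvalues i) *
        sortDesc hQ.eigenvalues k ^ #(Iic k)ᶜ : ℝ) : ℂ) := by
  have hQ' : (cfc (fun x => max x (sortDesc hQ.eigenvalues k)) Q).IsHermitian := cfc_predicate _ _
  rw [det_eq_prod_sortDesc_eigenvalues hQ', sortDesc_eigenvalues_eq_of_eq_cfc hQ hQ' rfl,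
    sortDesc_comp_of_monotoneOn fun _ _ _ _ h => max_le_max_right _ h,
    ← prod_max_apply_of_antitone (antitone_sortDesc _) k]
  push_cast
  rfl

theorem prod_sortDesc_eigenvalues_conjTranspose_mul_mul_le
    {P Q M T : Matrix (Fin d) (Fin d) ℂ} (hP : P.PosDef) (hQ : Q.PosDef) (hM : M.IsHermitian)
    (hPT : P = Tᴴ * T) (hMT : M = Tᴴ * Q * T) (k : Fin d) (s : Finset (Fin d))
    (hs : #s = k + 1) :
    ∏ i ∈ s, sortDesc hM.eigenvalues i ≤
      (∏ i ∈ s, sortDesc hP.1.eigenvalues i) * ∏ i ∈ Iic k, sortDesc hQ.1.eigenvalues i := by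
  set p := sortDesc hP.1.eigenvalues
  set c := sortDesc hQ.1.eigenvalues k
  have hc : 0 < c := hQ.eigenvalues_pos _
  set Q' := cfc (fun x => max x c) Q
  set M' := Tᴴ * Q' * T
  have hM' : M'.IsHermitian := isHermitian_conjTranspose_mul_mul T (cfc_predicate _ _)
  have hcP : (c • P).IsHermitian := (IsSelfAdjoint.all c).smul hP.1.isSelfAdjoint
  have hMM' : sortDesc hM.eigenvalues ≤ sortDesc hM'.eigenvalues :=
    sortDesc_eigenvalues_le_of_le hM hM'
      (hMT ▸ star_left_conjugate_le_conjugate (le_cfc_max hQ.1 c) T)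
  have hcPM' : (fun i => c * p i) ≤ sortDesc hM'.eigenvalues := by
    have hle : c • P ≤ M' := by
      have := star_left_conjugate_le_conjugate (smul_one_le_cfc_max hQ.1 c) T
      rwa [mul_smul_comm, mul_one, smul_mul_assoc, star_eq_conjTranspose, ← hPT] at this
    have := sortDesc_eigenvalues_le_of_le hcP hM' hle
    rwa [sortDesc_eigenvalues_eq_of_eq_cfc hP.1 hcP (cfc_const_mul_id c P hP.1.isSelfAdjoint).symm,
      sortDesc_comp_of_monotoneOn ((monotone_mul_left_of_nonneg hc.le).monotoneOn _)] at this
  have hdet : ∏ i, sortDesc hM'.eigenvalues i =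
      (∏ i, p i) * ((∏ i ∈ Iic k, sortDesc hQ.1.eigenvalues i) * c ^ #(Iic k)ᶜ) := by
    have : M'.det = P.det * Q'.det := by
      rw [det_mul, det_mul, hPT, det_mul]
      ring
    rw [det_eq_prod_sortDesc_eigenvalues hM', det_eq_prod_sortDesc_eigenvalues hP.1,
      det_cfc_max_sortDesc_eigenvalues hQ.1] at this
    exact_mod_cast this
  have hM_nonneg : 0 ≤ sortDesc hM.eigenvalues := fun i =>
    (hMT ▸ hQ.posSemidef.conjTranspose_mul_mul_same T).eigenvalues_nonneg _
  have hcp_nonneg : 0 ≤ fun i => c * p i := fun i => (mul_pos hc (hP.eigenvalues_pos _)).le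
  have key := prod_mul_prod_compl_le_prod hM_nonneg hcp_nonneg hMM' hcPM' s
  have hcard : #sᶜ = #(Iic k)ᶜ := by simp [card_compl, hs]
  rw [hdet, prod_mul_distrib, prod_const, hcard, ← prod_mul_prod_compl s p] at key
  refine le_of_mul_le_mul_right (a := c ^ #(Iic k)ᶜ * ∏ i ∈ sᶜ, p i) ?_
    (mul_pos (pow_pos hc _) (prod_pos fun i _ => hP.eigenvalues_pos _))
  linarith

variable {A B C : Matrix (Fin d) (Fin d) ℂ}

theorem prod_Iic_sortDesc_eigenvalues_le_of_charpoly_eq_mul (hA : A.PosDef) (hB : B.PosDef)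
    (hC : C.IsHermitian) (hCBA : C.charpoly = (B * A).charpoly) (k : Fin d) :
    ∏ i ∈ Iic k, sortDesc hC.eigenvalues i ≤
      ∏ i ∈ Iic k, sortDesc hB.1.eigenvalues i * sortDesc hA.1.eigenvalues i := by
  set R := CFC.sqrt B
  have hR : Rᴴ = R := (CFC.sqrt_nonneg B).star_eq
  have hRR : R * R = B := CFC.sqrt_mul_sqrt_self B hB.posSemidef.nonneg
  have hM : (Rᴴ * A * R).IsHermitian := isHermitian_conjTranspose_mul_mul R hA.1
  have hCM : hC.eigenvalues = hM.eigenvalues := by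
    rw [hC.eigenvalues_eq_eigenvalues_iff, hCBA, hR, ← hRR, Matrix.mul_assoc,
      charpoly_mul_comm R, Matrix.mul_assoc]
  rw [hCM, prod_mul_distrib]
  exact prod_sortDesc_eigenvalues_conjTranspose_mul_mul_le hB hA hM (by rw [hR, hRR]) rfl k _
    (Fin.card_Iic k)

theorem prod_sortDesc_mul_sortAsc_eigenvalues_le_of_charpoly_eq_mul (hA : A.PosDef)
    (hB : B.PosDef) (hC : C.IsHermitian) (hCBA : C.charpoly = (B * A).charpoly) (k : Fin d)
    (s : Finset (Fin d)) (hs : #s = k + 1) :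
    ∏ i ∈ s, sortDesc hB.1.eigenvalues i * sortAsc hA.1.eigenvalues i ≤
      ∏ i ∈ Iic k, sortDesc hC.eigenvalues i := by
  set R := CFC.sqrt A
  have hR : Rᴴ = R := (CFC.sqrt_nonneg A).star_eq
  have hRR : R * R = A := CFC.sqrt_mul_sqrt_self A hA.posSemidef.nonneg
  have hR_unit : IsUnit R := (CFC.isUnit_sqrt_iff A hA.posSemidef.nonneg).mpr hA.isUnit
  have hQ : (Rᴴ * B * R).PosDef := hR_unit.posDef_star_left_conjugate_iff.mpr hB
  have hCQ : hC.eigenvalues = hQ.1.eigenvalues := by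
    rw [hC.eigenvalues_eq_eigenvalues_iff, hCBA, hR, ← hRR, ← Matrix.mul_assoc,
      charpoly_mul_comm (B * R), Matrix.mul_assoc]
  have hPT : A⁻¹ = (R⁻¹)ᴴ * R⁻¹ := by
    rw [conjTranspose_nonsing_inv, hR, ← Matrix.mul_inv_rev, hRR]
  have hMT : B = (R⁻¹)ᴴ * (Rᴴ * B * R) * R⁻¹ := by
    have hR_det := (isUnit_iff_isUnit_det R).mp hR_unit
    rw [conjTranspose_nonsing_inv, hR, Matrix.mul_assoc, Matrix.mul_assoc,
      mul_nonsing_inv R hR_det, mul_one, ← Matrix.mul_assoc, nonsing_inv_mul R hR_det, one_mul]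
  have key := prod_sortDesc_eigenvalues_conjTranspose_mul_mul_le hA.inv hQ hB.1 hPT hMT k s hs
  rw [sortDesc_eigenvalues_inv hA, ← hCQ, prod_inv_distrib, inv_mul_eq_div] at key
  rw [prod_mul_distrib]
  exact (le_div_iff₀ (prod_pos fun i _ => hA.eigenvalues_pos _)).mp key

theorem majorizes_log_sortDesc_add_log_sortAsc_of_charpoly_eq_mul (hA : A.PosDef)
    (hB : B.PosDef) (hC : C.PosDef) (hCBA : C.charpoly = (B * A).charpoly) :
    Majorizes
      (fun i => Real.log (sortDesc hB.1.eigenvalues i) + Real.log (sortAsc hA.1.eigenvalues i))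
      (fun i => Real.log (sortDesc hC.1.eigenvalues i)) := by
  have hB_pos : ∀ i, 0 < sortDesc hB.1.eigenvalues i := fun i => hB.eigenvalues_pos _
  have hA_pos : ∀ i, 0 < sortAsc hA.1.eigenvalues i := fun i => hA.eigenvalues_pos _
  rw [log_add_log_eq_log_mul hB_pos hA_pos]
  refine majorizes_log_of_prod_Iic_le (fun i => mul_pos (hB_pos i) (hA_pos i))
    (fun i => hC.eigenvalues_pos _) (antitone_sortDesc _) (fun k => ?_)
    (by simp only [prod_mul_distrib, prod_sortDesc, prod_sortAsc,
      prod_eigenvalues_eq_of_charpoly_eq_mul hA.1 hB.1 hC.1 hCBA])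
  obtain ⟨s, hs, heq⟩ := exists_prod_Iic_sortDesc_eq _ k
  rw [heq]
  exact prod_sortDesc_mul_sortAsc_eigenvalues_le_of_charpoly_eq_mul hA hB hC.1 hCBA k s hs

theorem majorizes_log_sortDesc_of_charpoly_eq_mul (hA : A.PosDef) (hB : B.PosDef)
    (hC : C.PosDef) (hCBA : C.charpoly = (B * A).charpoly) :
    Majorizes (fun i => Real.log (sortDesc hC.1.eigenvalues i))
      (fun i => Real.log (sortDesc hB.1.eigenvalues i) +
        Real.log (sortDesc hA.1.eigenvalues i)) := by
  have hB_pos : ∀ i, 0 < sortDesc hB.1.eigenvalues i := fun i => hB.eigenvalues_pos _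
  have hA_pos : ∀ i, 0 < sortDesc hA.1.eigenvalues i := fun i => hA.eigenvalues_pos _
  rw [log_add_log_eq_log_mul hB_pos hA_pos]
  refine majorizes_log_of_prod_Iic_le (fun i => hC.eigenvalues_pos _)
    (fun i => mul_pos (hB_pos i) (hA_pos i))
    (fun i j hij => mul_le_mul (antitone_sortDesc _ hij) (antitone_sortDesc _ hij)
      (hA_pos j).le (hB_pos i).le) (fun k => ?_)
    (by simp only [prod_mul_distrib, prod_sortDesc,
      prod_eigenvalues_eq_of_charpoly_eq_mul hA.1 hB.1 hC.1 hCBA])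
  rw [sortDesc_eq_self_of_antitone (antitone_sortDesc _)]
  exact prod_Iic_sortDesc_eigenvalues_le_of_charpoly_eq_mul hA hB hC.1 hCBA k

end GelfandNaimark

/-- Gelfand–Naimark–Lidskii: `B * A` has positive real eigenvalues (being similar to the
positive definite matrix `B^{1/2} * A * B^{1/2}`), and
`log λ↓(B) + log λ↑(A) ≺ log λ(B * A) ≺ log λ↓(B) + log λ↓(A)`. -/
theorem gnl_log_majorization_product (d : ℕ) (A B : Matrix (Fin d) (Fin d) ℂ)
    (hA : A.PosDef) (hB : B.PosDef) :
    (∃ S : Matrix (Fin d) (Fin d) ℂ, IsUnit S.det ∧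
      B * A = S * (hB.posSemidef.sqrt * A * hB.posSemidef.sqrt) * S⁻¹) ∧
    ∃ μ : Fin d → ℝ, (∀ i, 0 < μ i) ∧ Antitone μ ∧
      (B * A).charpoly = ∏ i, (X - C (μ i : ℂ)) ∧
      Majorizes
        (fun i => Real.log (sortDesc hB.isHermitian.eigenvalues i)
          + Real.log (sortAsc hA.isHermitian.eigenvalues i))
        (fun i => Real.log (μ i)) ∧
      Majorizes (fun i => Real.log (μ i))
        (fun i => Real.log (sortDesc hB.isHermitian.eigenvalues i)
          + Real.log (sortDesc hA.isHermitian.eigenvalues i)) := by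
  rw [hB.posSemidef.sqrt_eq_cfcSqrt]
  set R := CFC.sqrt B
  have hR : Rᴴ = R := (CFC.sqrt_nonneg B).star_eq
  have hRR : R * R = B := CFC.sqrt_mul_sqrt_self B hB.posSemidef.nonneg
  have hR_unit : IsUnit R := (CFC.isUnit_sqrt_iff B hB.posSemidef.nonneg).mpr hB.isUnit
  have hC : (R * A * R).PosDef := by
    simpa [star_eq_conjTranspose, hR] using hR_unit.posDef_star_left_conjugate_iff.mpr hA
  have hCBA : (R * A * R).charpoly = (B * A).charpoly := by
    rw [← hRR, Matrix.mul_assoc R R A, charpoly_mul_comm R (R * A)]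
  have hR_det := (isUnit_iff_isUnit_det R).mp hR_unit
  refine ⟨⟨R, hR_det, ?_⟩, sortDesc hC.1.eigenvalues, fun i => hC.eigenvalues_pos _,
    antitone_sortDesc _, ?_,
    majorizes_log_sortDesc_add_log_sortAsc_of_charpoly_eq_mul hA hB hC hCBA,
    majorizes_log_sortDesc_of_charpoly_eq_mul hA hB hC hCBA⟩
  · rw [Matrix.mul_assoc, Matrix.mul_assoc, mul_nonsing_inv R hR_det, mul_one,
      ← Matrix.mul_assoc, hRR]
  · rw [← hCBA, hC.1.charpoly_eq]
    exact (prod_comp_sortDesc (fun a : ℝ => X - C (a : ℂ)) _).symm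
end

section
/- Let α₁ > α₂ > 0 and 0 < β₁ < β₂ be real numbers, and for t ∈ ℝ let C(t) = diag(α₁^{-1}, α₂^{-1}) · R(t) · diag(β₁, β₂) · R(t)^T, where R(t) is the 2×2 rotation matrix with rows (cos t, sin t) and (−sin t, cos t). Then C(t) has two positive real eigenvalues λ₁(C(t)) ≥ λ₂(C(t)), and for every t ∈ (−π/2, π/2) the vector (log λ₁(C(t)), log λ₂(C(t))) is majorized by (log(β₂/α₂), log(β₁/α₁)); moreover for t ≠ 0 the two vectors are distinct. -/
open Matrix Real Polynomial

set_option maxHeartbeats 2000000 in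
/-- The matrix `C(t) = diag(α₁⁻¹, α₂⁻¹) R(t) diag(β₁, β₂) R(t)ᵀ` has two positive real
eigenvalues `l₁ ≥ l₂`, and for `t ∈ (-π/2, π/2)` the vector `(log l₁, log l₂)` is majorized
by `(log (β₂/α₂), log (β₁/α₁))`, the two vectors being distinct when `t ≠ 0`. -/
theorem log_eigenvalues_rotated_product_majorized (α₁ α₂ β₁ β₂ : ℝ)
    (hα₂ : 0 < α₂) (hα : α₂ < α₁) (hβ₁ : 0 < β₁) (hβ : β₁ < β₂)
    (Cm : ℝ → Matrix (Fin 2) (Fin 2) ℝ)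
    (hCm : ∀ t, Cm t = !![α₁⁻¹, 0; 0, α₂⁻¹] * !![cos t, sin t; -sin t, cos t] *
      !![β₁, 0; 0, β₂] * (!![cos t, sin t; -sin t, cos t])ᵀ) :
    ∀ t : ℝ, ∃ l₁ l₂ : ℝ, 0 < l₂ ∧ l₂ ≤ l₁ ∧
      (Cm t).charpoly = (X - C l₁) * (X - C l₂) ∧
      (t ∈ Set.Ioo (-(π / 2)) (π / 2) →
        (max (log l₁) (log l₂) ≤ max (log (β₂ / α₂)) (log (β₁ / α₁)) ∧
          log l₁ + log l₂ = log (β₂ / α₂) + log (β₁ / α₁)) ∧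
        (t ≠ 0 → (log l₁, log l₂) ≠ (log (β₂ / α₂), log (β₁ / α₁)))) := by
  intro t
  have hα1 : 0 < α₁ := hα₂.trans hα
  have hβ₂ : 0 < β₂ := hβ₁.trans hβ
  have hcs : cos t ^ 2 + sin t ^ 2 = 1 := cos_sq_add_sin_sq t
  -- entries of Cm t
  obtain ⟨a, ha⟩ : ∃ x : ℝ, x = α₁⁻¹ * (β₁ * cos t ^ 2 + β₂ * sin t ^ 2) := ⟨_, rfl⟩
  obtain ⟨d, hd⟩ : ∃ x : ℝ, x = α₂⁻¹ * (β₁ * sin t ^ 2 + β₂ * cos t ^ 2) := ⟨_, rfl⟩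
  obtain ⟨b, hb⟩ : ∃ x : ℝ, x = α₁⁻¹ * ((β₂ - β₁) * sin t * cos t) := ⟨_, rfl⟩
  obtain ⟨e, he⟩ : ∃ x : ℝ, x = α₂⁻¹ * ((β₂ - β₁) * sin t * cos t) := ⟨_, rfl⟩
  have htrp : (!![cos t, sin t; -sin t, cos t] : Matrix (Fin 2) (Fin 2) ℝ)ᵀ
      = !![cos t, -sin t; sin t, cos t] := by
    ext i j; fin_cases i <;> fin_cases j <;> simp
  have hent : Cm t = !![a, b; e, d] := by
    rw [hCm, htrp, ha, hd, hb, he]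
    ext i j
    fin_cases i <;> fin_cases j <;>
      · simp [Matrix.mul_apply, Fin.sum_univ_succ]
        ring
  -- trace and determinant values
  obtain ⟨T, hT⟩ : ∃ x : ℝ, x = a + d := ⟨_, rfl⟩
  obtain ⟨Dd, hDd⟩ : ∃ x : ℝ, x = α₁⁻¹ * α₂⁻¹ * (β₁ * β₂) := ⟨_, rfl⟩
  have hDde : Dd = a * d - b * e := by
    rw [hDd, ha, hd, hb, he]
    linear_combination (-(α₁⁻¹ * α₂⁻¹ * β₁ * β₂ * (cos t ^ 2 + sin t ^ 2 + 1))) * hcs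
  have hD : 0 < Dd := by rw [hDd]; positivity
  have ha0 : 0 < a := by
    rw [ha]
    have h1 : 0 < β₁ * cos t ^ 2 + β₂ * sin t ^ 2 := by
      nlinarith [sq_nonneg (cos t), sq_nonneg (sin t)]
    positivity
  have hd0 : 0 < d := by
    rw [hd]
    have h1 : 0 < β₁ * sin t ^ 2 + β₂ * cos t ^ 2 := by
      nlinarith [sq_nonneg (cos t), sq_nonneg (sin t)]
    positivity
  have hT0 : 0 < T := by rw [hT]; linarith
  -- discriminant
  have hΔ0 : 0 ≤ T ^ 2 - 4 * Dd := by
    have : T ^ 2 - 4 * Dd = (a - d) ^ 2 + 4 * (b * e) := by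
      rw [hT]; linear_combination (-4 : ℝ) * hDde
    rw [this]
    have hbe : 0 ≤ b * e := by
      rw [hb, he]
      have : α₁⁻¹ * ((β₂ - β₁) * sin t * cos t) * (α₂⁻¹ * ((β₂ - β₁) * sin t * cos t))
          = (α₁⁻¹ * α₂⁻¹) * ((β₂ - β₁) * sin t * cos t) ^ 2 := by ring
      rw [this]; positivity
    nlinarith [sq_nonneg (a - d)]
  obtain ⟨σ, hσ⟩ : ∃ x : ℝ, x = Real.sqrt (T ^ 2 - 4 * Dd) := ⟨_, rfl⟩
  have hσsq : σ ^ 2 = T ^ 2 - 4 * Dd := by rw [hσ]; exact Real.sq_sqrt hΔ0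
  have hσnn : 0 ≤ σ := by rw [hσ]; exact Real.sqrt_nonneg _
  have hσltT : σ < T := by
    rw [hσ]
    have h1 : Real.sqrt (T ^ 2 - 4 * Dd) < Real.sqrt (T ^ 2) :=
      Real.sqrt_lt_sqrt hΔ0 (by linarith)
    rwa [Real.sqrt_sq hT0.le] at h1
  refine ⟨(T + σ) / 2, (T - σ) / 2, by linarith, by linarith, ?_, ?_⟩
  · -- charpoly
    have h1 : T = (T + σ) / 2 + (T - σ) / 2 := by ring
    have h2 : Dd = (T + σ) / 2 * ((T - σ) / 2) := by
      have : (T + σ) / 2 * ((T - σ) / 2) = (T ^ 2 - σ ^ 2) / 4 := by ring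
      rw [this, hσsq]; ring
    rw [hent, Matrix.charpoly, Matrix.det_fin_two,
      Matrix.charmatrix_apply_eq, Matrix.charmatrix_apply_eq,
      Matrix.charmatrix_apply_ne _ _ _ (by decide),
      Matrix.charmatrix_apply_ne _ _ _ (by decide)]
    rw [show (!![a, b; e, d] : Matrix (Fin 2) (Fin 2) ℝ) 0 0 = a from rfl,
      show (!![a, b; e, d] : Matrix (Fin 2) (Fin 2) ℝ) 1 1 = d from rfl,
      show (!![a, b; e, d] : Matrix (Fin 2) (Fin 2) ℝ) 0 1 = b from rfl,
      show (!![a, b; e, d] : Matrix (Fin 2) (Fin 2) ℝ) 1 0 = e from rfl]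
    have hadd : a + d = (T + σ) / 2 + (T - σ) / 2 := by rw [← hT]; exact h1
    have hmuld : a * d - b * e = (T + σ) / 2 * ((T - σ) / 2) := by rw [← hDde]; exact h2
    have hadT : C a + C d = C ((T + σ) / 2) + C ((T - σ) / 2) := by
      rw [← C_add, ← C_add, hadd]
    have hprod : C a * C d - C b * C e = C ((T + σ) / 2) * C ((T - σ) / 2) := by
      rw [← C_mul, ← C_mul, ← C_mul, ← C_sub, hmuld]
    calc (X - C a) * (X - C d) - -C b * -C e
        = X ^ 2 - (C a + C d) * X + (C a * C d - C b * C e) := by ring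
      _ = X ^ 2 - (C ((T + σ) / 2) + C ((T - σ) / 2)) * X
            + C ((T + σ) / 2) * C ((T - σ) / 2) := by rw [hadT, hprod]
      _ = (X - C ((T + σ) / 2)) * (X - C ((T - σ) / 2)) := by ring
  · intro ht
    obtain ⟨M, hM⟩ : ∃ x : ℝ, x = β₂ / α₂ := ⟨_, rfl⟩
    obtain ⟨m, hm⟩ : ∃ x : ℝ, x = β₁ / α₁ := ⟨_, rfl⟩
    have hM0 : 0 < M := by rw [hM]; positivity
    have hm0 : 0 < m := by rw [hm]; positivity
    have hmM : m < M := by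
      rw [hM, hm, div_lt_div_iff₀ hα1 hα₂]
      nlinarith
    have hDMm : Dd = M * m := by
      rw [hDd, hM, hm]
      field_simp
    have hgap : M + m - T = (β₂ - β₁) * (α₂⁻¹ - α₁⁻¹) * sin t ^ 2 := by
      rw [hM, hm, hT, ha, hd, div_eq_mul_inv, div_eq_mul_inv]
      linear_combination (-(β₂ * α₂⁻¹ + β₁ * α₁⁻¹)) * hcs
    have hinv : 0 < α₂⁻¹ - α₁⁻¹ := by
      have h1 : α₁⁻¹ < α₂⁻¹ := by
        have := one_div_lt_one_div_of_lt hα₂ hα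
        rwa [one_div, one_div] at this
      linarith
    have hgap0 : 0 ≤ M + m - T := by
      rw [hgap]
      exact mul_nonneg (mul_nonneg (by linarith) hinv.le) (sq_nonneg _)
    have h2MT : 0 < 2 * M - T := by linarith
    have hΔle : T ^ 2 - 4 * Dd ≤ (2 * M - T) ^ 2 := by
      have hkey : (2 * M - T) ^ 2 - (T ^ 2 - 4 * Dd) = 4 * M * (M + m - T) := by
        rw [hDMm]; ring
      have h5 : 0 ≤ 4 * M * (M + m - T) := by
        apply mul_nonneg _ hgap0
        linarith
      linarith
    have hσle : σ ≤ 2 * M - T := by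
      rw [hσ]
      calc Real.sqrt (T ^ 2 - 4 * Dd) ≤ Real.sqrt ((2 * M - T) ^ 2) :=
            Real.sqrt_le_sqrt hΔle
        _ = 2 * M - T := Real.sqrt_sq h2MT.le
    have hl₁le : (T + σ) / 2 ≤ M := by linarith
    have hl₂pos : 0 < (T - σ) / 2 := by linarith
    have hl₁pos : 0 < (T + σ) / 2 := by linarith
    have hlogle : log ((T + σ) / 2) ≤ log M := Real.log_le_log hl₁pos hl₁le
    have hlog21 : log ((T - σ) / 2) ≤ log ((T + σ) / 2) :=
      Real.log_le_log hl₂pos (by linarith)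
    have hlogmM : log m ≤ log M := Real.log_le_log hm0 hmM.le
    rw [← hM, ← hm]
    constructor
    · constructor
      · rw [max_eq_left hlogmM]
        exact max_le hlogle (hlog21.trans hlogle)
      · have hprod : (T + σ) / 2 * ((T - σ) / 2) = M * m := by
          have h4 : (T + σ) / 2 * ((T - σ) / 2) = (T ^ 2 - σ ^ 2) / 4 := by ring
          rw [h4, hσsq, hDMm]; ring
        rw [← Real.log_mul hl₁pos.ne' hl₂pos.ne', hprod,
          Real.log_mul hM0.ne' hm0.ne']
    · intro ht0 heq
      rw [Prod.mk.injEq] at heq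
      have hss0 : sin t ≠ 0 := by
        intro h
        obtain ⟨ht1, ht2⟩ := ht
        have hπ : 0 < π := Real.pi_pos
        exact ht0 ((Real.sin_eq_zero_iff_of_lt_of_lt (by linarith) (by linarith)).mp h)
      have hgaps : 0 < M + m - T := by
        rw [hgap]
        have hs2 : 0 < sin t ^ 2 :=
          lt_of_le_of_ne (sq_nonneg _) (Ne.symm (pow_ne_zero 2 hss0))
        exact mul_pos (mul_pos (by linarith) hinv) hs2
      have hΔlt : T ^ 2 - 4 * Dd < (2 * M - T) ^ 2 := by
        have hkey : (2 * M - T) ^ 2 - (T ^ 2 - 4 * Dd) = 4 * M * (M + m - T) := by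
          rw [hDMm]; ring
        have h5 : 0 < 4 * M * (M + m - T) := by
          apply mul_pos _ hgaps
          linarith
        linarith
      have hσlt : σ < 2 * M - T := by
        rw [hσ]
        have h1 : Real.sqrt (T ^ 2 - 4 * Dd) < Real.sqrt ((2 * M - T) ^ 2) :=
          Real.sqrt_lt_sqrt hΔ0 hΔlt
        rwa [Real.sqrt_sq h2MT.le] at h1
      have hlt : (T + σ) / 2 < M := by linarith
      have hcon : log ((T + σ) / 2) < log M := Real.log_lt_log hl₁pos hlt
      rw [heq.1] at hcon
      exact lt_irrefl _ hcon
end
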